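/- arXiv:1709.02730 — 4 statements merged into one kernel-verified Lean document; each statement's English description precedes it below -/
import Mathlib

section
/- On the complexified prolongation with nonlinear connection N, the mixed brackets of the adapted frame are: [X_α, X_β̄]_T = (δ_β̄ N^γ_α) V_γ − (δ_α N^γ̄_β̄) V_γ̄, [X_α, V_β]_T = (∂̇_β N^γ_α) V_γ, [X_α, V_β̄]_T = (∂̇_β̄ N^γ_α) V_γ, and [V_α, V_β]_T = [V_α, V_β̄]_T = 0. -/
/- STATEMENT 5: Mixed brackets of the adapted frame {X_α, V_α, X_ᾱ, V_ᾱ} on the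
complexified prolongation, with X_α = Z_α − N^β_α V_β and conjugates:
 ⁅X_α, X_β̄⁆ = (δ_β̄ N^γ_α) V_γ − (δ_α N^γ̄_β̄) V_γ̄,
 ⁅X_α, V_β⁆ = (∂̇_β N^γ_α) V_γ,  ⁅X_α, V_β̄⁆ = (∂̇_β̄ N^γ_α) V_γ,
 ⁅V_α, V_β⁆ = 0,  ⁅V_α, V_β̄⁆ = 0,
where δ_α = σ(X_α), δ_β̄ = σ(X_β̄), ∂̇_β = σ(V_β), ∂̇_β̄ = σ(V_β̄). -/
theorem mixed_brackets_adapted_frame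
    {A L : Type*} [CommRing A] [Algebra ℂ A] [LieRing L] [Module A L] {m : ℕ}
    (σ : L → Derivation ℂ A A)
    (hσadd : ∀ x y : L, σ (x + y) = σ x + σ y)
    (hσsmul : ∀ (a : A) (y : L), σ (a • y) = a • σ y)
    (hLeibniz : ∀ (x y : L) (f : A), ⁅x, f • y⁆ = f • ⁅x, y⁆ + (σ x f) • y)
    (Z V Zb Vb : Fin m → L)
    (N Nb : Fin m → Fin m → A)
    (hZV : ∀ α β, ⁅Z α, V β⁆ = 0)
    (hVV : ∀ α β, ⁅V α, V β⁆ = 0)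
    (hZZb : ∀ α β, ⁅Z α, Zb β⁆ = 0)
    (hZVb : ∀ α β, ⁅Z α, Vb β⁆ = 0)
    (hVZb : ∀ α β, ⁅V α, Zb β⁆ = 0)
    (hVVb : ∀ α β, ⁅V α, Vb β⁆ = 0)
    (hZbVb : ∀ α β, ⁅Zb α, Vb β⁆ = 0)
    (hVbVb : ∀ α β, ⁅Vb α, Vb β⁆ = 0)
    (X Xb : Fin m → L)
    (hX : ∀ α, X α = Z α - ∑ β, N β α • V β)
    (hXb : ∀ α, Xb α = Zb α - ∑ β, Nb β α • Vb β) :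
    (∀ α β, ⁅X α, Xb β⁆ =
        (∑ γ, (σ (Xb β) (N γ α)) • V γ) - ∑ γ, (σ (X α) (Nb γ β)) • Vb γ) ∧
    (∀ α β, ⁅X α, V β⁆ = ∑ γ, (σ (V β) (N γ α)) • V γ) ∧
    (∀ α β, ⁅X α, Vb β⁆ = ∑ γ, (σ (Vb β) (N γ α)) • V γ) ∧
    (∀ α β, ⁅V α, V β⁆ = 0) ∧
    (∀ α β, ⁅V α, Vb β⁆ = 0) := by
  -- bracket with sums
  have lie_sum' : ∀ (x : L) (s : Finset (Fin m)) (g : Fin m → L),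
      ⁅x, ∑ i ∈ s, g i⁆ = ∑ i ∈ s, ⁅x, g i⁆ := by
    intro x s g
    induction s using Finset.cons_induction with
    | empty => simp
    | cons a s ha ih => rw [Finset.sum_cons, Finset.sum_cons]; simp [ih]
  have sum_lie' : ∀ (x : L) (s : Finset (Fin m)) (g : Fin m → L),
      ⁅∑ i ∈ s, g i, x⁆ = ∑ i ∈ s, ⁅g i, x⁆ := by
    intro x s g
    induction s using Finset.cons_induction with
    | empty => simp
    | cons a s ha ih => rw [Finset.sum_cons, Finset.sum_cons]; simp [ih]
  -- left Leibniz
  have hL2 : ∀ (x y : L) (f : A), ⁅f • x, y⁆ = f • ⁅x, y⁆ - (σ y f) • x := by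
    intro x y f
    rw [← lie_skew (f • x) y, hLeibniz, ← lie_skew x y]
    simp only [smul_neg, neg_add, sub_eq_add_neg]
  -- σ of zero / sub / sums
  have hσzero : σ 0 = 0 := by
    have h := hσadd 0 0
    rw [add_zero] at h
    exact (right_eq_add.mp h)
  have hσsub : ∀ x y : L, σ (x - y) = σ x - σ y := by
    intro x y
    have hneg : σ (-y) = - σ y := by
      rw [← neg_one_smul A y, hσsmul, neg_one_smul]
    rw [sub_eq_add_neg, hσadd, hneg, sub_eq_add_neg]
  have hσsum : ∀ (s : Finset (Fin m)) (g : Fin m → L),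
      σ (∑ i ∈ s, g i) = ∑ i ∈ s, σ (g i) := by
    intro s g
    induction s using Finset.cons_induction with
    | empty => simpa using hσzero
    | cons a s ha ih => rw [Finset.sum_cons, Finset.sum_cons, hσadd, ih]
  -- evaluation of sums of derivations
  have hevalsum : ∀ (s : Finset (Fin m)) (d : Fin m → Derivation ℂ A A) (f : A),
      (∑ i ∈ s, d i) f = ∑ i ∈ s, d i f := by
    intro s d f
    induction s using Finset.cons_induction with
    | empty => simp
    | cons a s ha ih => rw [Finset.sum_cons, Finset.sum_cons]; simp [ih]
  -- σ of the adapted fields, evaluated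
  have hσX : ∀ α (f : A), σ (X α) f = σ (Z α) f - ∑ δ, N δ α * σ (V δ) f := by
    intro α f
    rw [hX, hσsub, hσsum]
    simp [hσsmul, hevalsum, smul_eq_mul]
  have hσXb : ∀ β (f : A), σ (Xb β) f = σ (Zb β) f - ∑ δ, Nb δ β * σ (Vb δ) f := by
    intro β f
    rw [hXb, hσsub, hσsum]
    simp [hσsmul, hevalsum, smul_eq_mul]
  refine ⟨?_, ?_, ?_, hVV, hVVb⟩
  · intro α β
    have hLHS : ⁅X α, Xb β⁆ =
        ((∑ δ, (σ (Zb β) (N δ α)) • V δ) - ∑ γ, (σ (Z α) (Nb γ β)) • Vb γ)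
        + ((∑ γ, ∑ δ, (N δ α * σ (V δ) (Nb γ β)) • Vb γ)
          - ∑ γ, ∑ δ, (Nb γ β * σ (Vb γ) (N δ α)) • V δ) := by
      rw [hX α, hXb β, sub_lie, lie_sub, lie_sub, hZZb,
        lie_sum', sum_lie', lie_sum']
      simp only [hLeibniz, hL2, hZVb, hVZb, hVVb, sum_lie', hσsum, hevalsum,
        hσsmul, Derivation.smul_apply, smul_eq_mul, smul_zero, zero_add,
        zero_sub, smul_neg, neg_neg, Finset.smul_sum, smul_smul,
        Finset.sum_smul, Finset.sum_neg_distrib, Finset.sum_sub_distrib,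
        Finset.sum_add_distrib, neg_smul, one_smul]
      abel
    rw [hLHS]
    have hR1 : (∑ γ, (σ (Xb β) (N γ α)) • V γ) =
        (∑ γ, (σ (Zb β) (N γ α)) • V γ)
        - ∑ γ, ∑ δ, (Nb δ β * σ (Vb δ) (N γ α)) • V γ := by
      simp only [hσXb, sub_smul, Finset.sum_sub_distrib, Finset.sum_smul]
    have hR2 : (∑ γ, (σ (X α) (Nb γ β)) • Vb γ) =
        (∑ γ, (σ (Z α) (Nb γ β)) • Vb γ)
        - ∑ γ, ∑ δ, (N δ α * σ (V δ) (Nb γ β)) • Vb γ := by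
      simp only [hσX, sub_smul, Finset.sum_sub_distrib, Finset.sum_smul]
    rw [hR1, hR2, Finset.sum_comm (f := fun γ δ => (Nb δ β * σ (Vb δ) (N γ α)) • V γ),
      Finset.sum_comm (f := fun γ δ => (N δ α * σ (V δ) (Nb γ β)) • Vb γ)]
    abel
  · intro α β
    rw [hX α, sub_lie, hZV, sum_lie']
    simp [hL2, hVV, Finset.sum_neg_distrib]
  · intro α β
    rw [hX α, sub_lie, hZVb, sum_lie']
    simp [hL2, hVVb, Finset.sum_neg_distrib]
end

section
/- For the Chern–Finsler connection on a Finsler Lie algebroid, the horizontal coefficients satisfy L^γ_{αβ} = ∂̇_α N^γ_β, where N^γ_β = h^{σ̄γ} ∂_β ∂̇_σ̄ F are the Chern–Finsler nonlinear connection coefficients and L^γ_{αβ} = h^{σ̄γ} δ_β(h_{ασ̄}). -/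
/- STATEMENT 7: For the Chern–Finsler connection on a Finsler Lie algebroid,
L^γ_{αβ} = ∂̇_α N^γ_β, where N^γ_β = h^{σ̄γ} ∂_β ∂̇_σ̄ F and
L^γ_{αβ} = h^{σ̄γ} δ_β(h_{ασ̄}), with δ_β = ∂_β − N^ε_β ∂̇_ε.
Model: A = functions on E; ∂_β = ρ^k_β ∂/∂z^k, ∂̇_α, ∂̇_ᾱ are pairwise commuting
derivations; u^α, ū^α are the fiber coordinates; F is (1,1)-homogeneous,
expressed through the Euler identities u^α ∂̇_α F = F and ū^α ∂̇_ᾱ F = F. -/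
theorem chernFinsler_L_eq_dv_N
    {A : Type*} [CommRing A] [Algebra ℂ A] {m : ℕ}
    (dz dv dvb : Fin m → Derivation ℂ A A)
    (hcomm_vv : ∀ α β (f : A), dv α (dv β f) = dv β (dv α f))
    (hcomm_vvb : ∀ α β (f : A), dv α (dvb β f) = dvb β (dv α f))
    (hcomm_vz : ∀ α β (f : A), dv α (dz β f) = dz β (dv α f))
    (hcomm_vbz : ∀ α β (f : A), dvb α (dz β f) = dz β (dvb α f))
    (u ub : Fin m → A)
    (hu : ∀ α β, dv α (u β) = if α = β then 1 else 0)
    (hub : ∀ α β, dvb α (ub β) = if α = β then 1 else 0)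
    (huv : ∀ α β, dvb α (u β) = 0) (hubv : ∀ α β, dv α (ub β) = 0)
    (huz : ∀ α β, dz α (u β) = 0) (hubz : ∀ α β, dz α (ub β) = 0)
    (F : A)
    (hEuler : (∑ α, u α * dv α F) = F)
    (hEulerb : (∑ α, ub α * dvb α F) = F)
    (hm hinv : Fin m → Fin m → A)
    (hdef : ∀ α β, hm α β = dv α (dvb β F))
    (hinv1 : ∀ α γ, (∑ β, hm α β * hinv β γ) = if α = γ then 1 else 0)
    (hinv2 : ∀ α γ, (∑ β, hinv α β * hm β γ) = if α = γ then 1 else 0)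
    (N : Fin m → Fin m → A)
    (hN : ∀ γ β, N γ β = ∑ σ', hinv σ' γ * dz β (dvb σ' F))
    (δ : Fin m → A → A)
    (hδ : ∀ β f, δ β f = dz β f - ∑ ε, N ε β * dv ε f)
    (L : Fin m → Fin m → Fin m → A)
    (hL : ∀ γ α β, L γ α β = ∑ σ', hinv σ' γ * δ β (hm α σ')) :
    ∀ γ α β, L γ α β = dv α (N γ β) := by
  intro γ α β
  have hDhm : ∀ a b, dv α (hm a b) = dv a (hm α b) := by
    intro a b; rw [hdef, hdef, hcomm_vv]
  -- derivative of the inverse matrix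
  have h1 : ∀ σ c, (∑ b, dv α (hinv σ b) * hm b c) = -(∑ b, hinv σ b * dv α (hm b c)) := by
    intro σ c
    have h := congrArg (dv α) (hinv2 σ c)
    rw [map_sum] at h
    simp only [Derivation.leibniz, smul_eq_mul] at h
    have hz : dv α (if σ = c then (1:A) else 0) = 0 := by split_ifs <;> simp
    rw [hz, Finset.sum_add_distrib] at h
    calc (∑ b, dv α (hinv σ b) * hm b c) = ∑ b, hm b c * dv α (hinv σ b) :=
          Finset.sum_congr rfl fun b _ => mul_comm _ _
      _ = -(∑ b, hinv σ b * dv α (hm b c)) := by linear_combination h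
  have key : ∀ σ, dv α (hinv σ γ)
      = -(∑ c, (∑ b, hinv σ b * dv α (hm b c)) * hinv c γ) := by
    intro σ
    have h2 : ∑ c, (∑ b, dv α (hinv σ b) * hm b c) * hinv c γ = dv α (hinv σ γ) := by
      have e1 : ∀ c, (∑ b, dv α (hinv σ b) * hm b c) * hinv c γ
          = ∑ b, dv α (hinv σ b) * (hm b c * hinv c γ) := by
        intro c
        rw [Finset.sum_mul]
        exact Finset.sum_congr rfl fun b _ => mul_assoc _ _ _
      simp_rw [e1]
      rw [Finset.sum_comm]
      simp_rw [← Finset.mul_sum, hinv1]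
      simp
    rw [← h2, ← Finset.sum_neg_distrib]
    refine Finset.sum_congr rfl fun c _ => ?_
    rw [h1 σ c]; ring
  -- the cross term
  have cross : (∑ σ', hinv σ' γ * ∑ ε, N ε β * dv ε (hm α σ'))
      = ∑ σ', dz β (dvb σ' F) * ∑ c, (∑ b, hinv σ' b * dv α (hm b c)) * hinv c γ := by
    calc (∑ σ', hinv σ' γ * ∑ ε, N ε β * dv ε (hm α σ'))
        = ∑ c, ∑ b, (∑ σ', hinv σ' b * dz β (dvb σ' F)) * (dv α (hm b c) * hinv c γ) := by
          refine Finset.sum_congr rfl fun c _ => ?_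
          rw [Finset.mul_sum]
          refine Finset.sum_congr rfl fun b _ => ?_
          rw [← hN, hDhm]
          ring
      _ = ∑ c, ∑ b, ∑ σ', (hinv σ' b * dz β (dvb σ' F)) * (dv α (hm b c) * hinv c γ) := by
          simp_rw [Finset.sum_mul]
      _ = ∑ c, ∑ σ', ∑ b, (hinv σ' b * dz β (dvb σ' F)) * (dv α (hm b c) * hinv c γ) :=
          Finset.sum_congr rfl fun c _ => Finset.sum_comm
      _ = ∑ σ', ∑ c, ∑ b, (hinv σ' b * dz β (dvb σ' F)) * (dv α (hm b c) * hinv c γ) :=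
          Finset.sum_comm
      _ = ∑ σ', dz β (dvb σ' F) * ∑ c, (∑ b, hinv σ' b * dv α (hm b c)) * hinv c γ := by
          refine Finset.sum_congr rfl fun σ' _ => ?_
          rw [Finset.mul_sum]
          refine Finset.sum_congr rfl fun c _ => ?_
          rw [Finset.sum_mul, Finset.mul_sum]
          exact Finset.sum_congr rfl fun b _ => by ring
  rw [hL, hN]
  simp_rw [hδ]
  rw [map_sum]
  simp_rw [Derivation.leibniz, smul_eq_mul, hcomm_vz, ← hdef, key, mul_sub, mul_neg]
  rw [Finset.sum_sub_distrib, Finset.sum_add_distrib, Finset.sum_neg_distrib,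
    ← cross, sub_eq_add_neg]
end

section
/- The horizontal Laplacian of a function f on a Finsler Lie algebroid, Δ^h f = div^h(grad^h f), equals Δ^h f = (1/h) δ_α[h h^{γ̄α}(δ_γ̄ f)] − [h^{γ̄α}(δ_γ̄ f)] C_α, where h = det(h_{αβ̄}) and C_α = C^β_{αβ} are the algebroid structure function traces. -/
/- STATEMENT 13: The horizontal Laplacian Δ^h f = div^h(grad^h f) of a function
f on a Finsler Lie algebroid equals
  Δ^h f = (1/h) δ_α[h h^{γ̄α}(δ_γ̄ f)] − [h^{γ̄α}(δ_γ̄ f)] 𝒞_α,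
with h = det(h_{αβ̄}) and 𝒞_α = 𝒞^β_{αβ}.  In multiplicative form:
  Δ^h f · h = Σ_α δ_α(h Z^α) − (Σ_α Z^α 𝒞_α)·h,  where Z^α = h^{γ̄α} δ_γ̄ f,
Δ^h f is given by the horizontal divergence formula applied to grad^h f,
and (Σ_β L^β_{βα})·h = δ_α h. -/
theorem horizontal_laplacian_function
    {A : Type*} [CommRing A] [Algebra ℂ A] {m : ℕ}
    (δ δb : Fin m → Derivation ℂ A A)
    (hdet : A)
    (Hinv : Matrix (Fin m) (Fin m) A)
    (L 𝒞 : Fin m → Fin m → Fin m → A)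
    (htrace : ∀ α, (∑ β, L β β α) * hdet = δ α hdet)
    (f : A) (Z : Fin m → A)
    (hZ : ∀ α, Z α = ∑ γ, Hinv γ α * δb γ f)
    (Δh : A)
    (hΔ : Δh = (∑ α, (δ α (Z α) + ∑ β, Z α * L β α β))
          - (∑ α, Z α * (∑ β, (L β α β - L β β α)))
          - (∑ α, Z α * ∑ β, 𝒞 β α β)) :
    Δh * hdet = (∑ α, δ α (hdet * Z α)) - (∑ α, Z α * ∑ β, 𝒞 β α β) * hdet := by
  subst hΔ
  have key : ∀ α, (∑ β, (L β α β - Z α * 0)) = ∑ β, L β α β := by simp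
  simp only [Derivation.leibniz]
  rw [sub_mul, sub_mul, Finset.sum_mul, Finset.sum_mul]
  have h1 : ∀ α : Fin m, (δ α (Z α) + ∑ β, Z α * L β α β) * hdet
      - Z α * (∑ β, (L β α β - L β β α)) * hdet
      = hdet * δ α (Z α) + δ α hdet * Z α := by
    intro α
    have : Z α * (∑ β, L β β α) * hdet = Z α * δ α hdet := by
      rw [mul_assoc, htrace]
    calc (δ α (Z α) + ∑ β, Z α * L β α β) * hdet
        - Z α * (∑ β, (L β α β - L β β α)) * hdet
        = δ α (Z α) * hdet + Z α * (∑ β, L β β α) * hdet := by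
          rw [Finset.sum_sub_distrib]; simp only [← Finset.mul_sum]; ring
      _ = hdet * δ α (Z α) + δ α hdet * Z α := by rw [this]; ring
  rw [← Finset.sum_sub_distrib]
  simp only [h1, smul_eq_mul]
  congr 1
  apply Finset.sum_congr rfl
  intro x _
  ring
end

section
/- The vertical Laplacian of a function f on a Finsler Lie algebroid, Δ^v f = div^v(grad^v f), equals Δ^v f = (1/h) ∂̇_α[h h^{γ̄α}(∂̇_γ̄ f)] + [h^{γ̄α}(∂̇_γ̄ f)] C_α, where C_α = C^β_{βα} = ∂̇_α(ln h). -/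
/- STATEMENT 14: The vertical Laplacian Δ^v f = div^v(grad^v f) of a function f
on a Finsler Lie algebroid equals
  Δ^v f = (1/h) ∂̇_α[h h^{γ̄α}(∂̇_γ̄ f)] + [h^{γ̄α}(∂̇_γ̄ f)] C_α,
with C_α = C^β_{βα} = ∂̇_α(ln h).  In multiplicative form:
  Δ^v f · h = Σ_α ∂̇_α(h V^α) + (Σ_α V^α C_α)·h,  where V^α = h^{γ̄α} ∂̇_γ̄ f,
Δ^v f is given by the vertical divergence formula applied to grad^v f,
and (Σ_β C^β_{βα})·h = ∂̇_α h. -/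
theorem vertical_laplacian_function
    {A : Type*} [CommRing A] [Algebra ℂ A] {m : ℕ}
    (dv dvb : Fin m → Derivation ℂ A A)
    (hdet : A)
    (Hinv : Matrix (Fin m) (Fin m) A)
    (C : Fin m → Fin m → Fin m → A)
    (hCsym : ∀ γ α β, C γ α β = C γ β α)
    (htrace : ∀ α, (∑ β, C β β α) * hdet = dv α hdet)
    (f : A) (V : Fin m → A)
    (hV : ∀ α, V α = ∑ γ, Hinv γ α * dvb γ f)
    (Δv : A)
    (hΔ : Δv = (∑ α, (dv α (V α) + ∑ β, V α * C β α β))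
          + ∑ α, V α * ∑ β, C β α β) :
    Δv * hdet = (∑ α, dv α (hdet * V α)) + (∑ α, V α * ∑ β, C β β α) * hdet := by
  subst hΔ
  have hsym : ∀ α, (∑ β, C β α β) = ∑ β, C β β α := fun α =>
    Finset.sum_congr rfl fun β _ => hCsym β α β
  have h1 : ∀ α, dv α (hdet * V α)
      = hdet * dv α (V α) + V α * ((∑ β, C β β α) * hdet) := by
    intro α
    rw [Derivation.leibniz, htrace, smul_eq_mul, smul_eq_mul]
  have R : (∑ α, dv α (hdet * V α))
      = hdet * (∑ α, dv α (V α)) + (∑ α, V α * ∑ β, C β β α) * hdet := by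
    rw [Finset.mul_sum, Finset.sum_mul, ← Finset.sum_add_distrib]
    exact Finset.sum_congr rfl fun α _ => by rw [h1]; ring
  have L : (∑ α, (dv α (V α) + ∑ β, V α * C β α β))
      = (∑ α, dv α (V α)) + ∑ α, V α * ∑ β, C β β α := by
    rw [← Finset.sum_add_distrib]
    exact Finset.sum_congr rfl fun α _ => by rw [← Finset.mul_sum, hsym]
  rw [R, L]
  simp only [hsym]
  ring
end
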